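/- Let u(x,y,z,w) = sin(x+z)·cosh(y+w), v(x,y,z,w) = −cos(x+z)·sinh(y+w), u₀(x,y,z,w) = x+y+z+w, v₀(x,y,z,w) = x−y+z−w, let α, β ∈ ℝ, and define f̃ = (u + αu₀, v + αv₀, u + βu₀, v + βv₀) : ℝ⁴ → ℝ⁴. Then f̃ is anti-i-holomorphic, and at every p = (x,y,z,w) the graph Γ_{f̃} has equal Kähler angles with cos²θ(p) = 2(α−β)² / (1 + 2[(u_x+α)² + (u_y+α)² + (u_x+β)² + (u_y+β)²]), where u_x = cos(x+z)cosh(y+w) and u_y = sin(x+z)sinh(y+w). Consequently cos²θ(p) ≤ 2(α−β)²/(1 + 2(α−β)²) < 1 everywhere, so Γ_{f̃} has no J₀-complex points; and if αβ ≥ 0 then cos²θ(p) ≤ 2(α²+β²)/(1 + 2(α²+β²)) for every p. -/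

import Mathlib

open scoped RealInnerProductSpace

noncomputable section

abbrev E4 : Type := EuclideanSpace ℝ (Fin 4)

noncomputable def mk4 (a b c d : ℝ) : E4 := (WithLp.equiv 2 (Fin 4 → ℝ)).symm ![a, b, c, d]

/-- The orthogonal complex structure `i(x,y,z,w) = (−y, x, −w, z)` of ℝ⁴. -/
noncomputable def iC : E4 →L[ℝ] E4 :=
  LinearMap.toContinuousLinearMap
    (Matrix.toEuclideanLin (!![0,-1,0,0; 1,0,0,0; 0,0,0,-1; 0,0,1,0] : Matrix (Fin 4) (Fin 4) ℝ))

noncomputable def Sp (f : E4 → E4) (p : E4) : E4 →L[ℝ] E4 :=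
  Ring.inverse (1 + ContinuousLinearMap.adjoint (fderiv ℝ f p) * fderiv ℝ f p) *
    (ContinuousLinearMap.adjoint (fderiv ℝ f p) - fderiv ℝ f p)

noncomputable def uS (p : E4) : ℝ := Real.sin (p 0 + p 2) * Real.cosh (p 1 + p 3)

noncomputable def vS (p : E4) : ℝ := -(Real.cos (p 0 + p 2) * Real.sinh (p 1 + p 3))

noncomputable def u0 (p : E4) : ℝ := p 0 + p 1 + p 2 + p 3

noncomputable def v0 (p : E4) : ℝ := p 0 - p 1 + p 2 - p 3

noncomputable def fT (α β : ℝ) : E4 → E4 := fun p =>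
  mk4 (uS p + α * u0 p) (vS p + α * v0 p) (uS p + β * u0 p) (vS p + β * v0 p)

/-- `u_x = cos(x+z)cosh(y+w)` -/
noncomputable def ux (p : E4) : ℝ := Real.cos (p 0 + p 2) * Real.cosh (p 1 + p 3)

/-- `u_y = sin(x+z)sinh(y+w)` -/
noncomputable def uy (p : E4) : ℝ := Real.sin (p 0 + p 2) * Real.sinh (p 1 + p 3)

/-- the claimed value of `cos²θ` at `p` -/
noncomputable def cos2 (α β : ℝ) (p : E4) : ℝ :=
  2 * (α - β) ^ 2 /
    (1 + 2 * ((ux p + α) ^ 2 + (uy p + α) ^ 2 + (ux p + β) ^ 2 + (uy p + β) ^ 2))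

/-!
At every point the Jacobian of `f̃` has the block form `A = [[B_α, B_α], [B_β, B_β]]` (blocks of
size 2) with `B_γ = [[u_x + γ, u_y + γ], [u_y + γ, -(u_x + γ)]]`. Each `B_γ` is symmetric,
anticommutes with the complex structure of `ℝ²` and squares to `((u_x + γ)² + (u_y + γ)²)·1`, and
`B_α - B_β = (α - β)·R` with `R = [[1, 1], [1, -1]]`. Hence `Aᵀ A = N·Q`, where
`N·1 = B_α² + B_β²`, and `Aᵀ - A = (α - β)·T` for the constant matrices `Q = [[1, 1], [1, 1]]`
(`diagQ`) and `T = [[0, -R], [R, 0]]` (`skewT`), which satisfy `Q² = 2Q`, `T² = -2`, `QTQ = 0` and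
`TQT = 2Q - 4`. In any algebra these relations give `(1 + N Q)⁻¹ = 1 - N/(1 + 2N)·Q` and then
`S² = -2(α - β)²/(1 + 2N)`. Finally `A` kills `(1, 0, -1, 0)`, since `f̃` only depends on `x + z`
and `y + w`, so `A² ≠ -1`.
-/

open Matrix

section InverseAlgebra

variable {R : Type*} [Ring R] [Algebra ℝ R]

theorem ring_inverse_one_add_smul {Q : R} (hQ : Q * Q = (2 : ℝ) • Q) {N : ℝ}
    (hN : 1 + 2 * N ≠ 0) :
    Ring.inverse (1 + N • Q) = 1 - (N / (1 + 2 * N)) • Q := by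
  have hc : N / (1 + 2 * N) * (1 + 2 * N) = N := div_mul_cancel₀ N hN
  have h₁ : (1 + N • Q) * (1 - (N / (1 + 2 * N)) • Q) = 1 := by
    simp only [add_mul, mul_sub, one_mul, mul_one, smul_mul_smul, hQ, smul_smul]
    match_scalars
    · ring
    · linear_combination -hc
  have h₂ : (1 - (N / (1 + 2 * N)) • Q) * (1 + N • Q) = 1 := by
    simp only [sub_mul, mul_add, one_mul, mul_one, smul_mul_smul, hQ, smul_smul]
    match_scalars
    · ring
    · linear_combination -hc
  exact Ring.inverse_unit ⟨_, _, h₁, h₂⟩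

theorem ring_inverse_one_add_smul_mul_smul_mul_self {Q T : R} (hQ : Q * Q = (2 : ℝ) • Q)
    (hT : T * T = -(2 : ℝ) • 1) (hQTQ : Q * T * Q = 0)
    (hTQT : T * Q * T = (2 : ℝ) • Q - (4 : ℝ) • 1) {N : ℝ} (hN : 1 + 2 * N ≠ 0) (d : ℝ) :
    (Ring.inverse (1 + N • Q) * (d • T)) * (Ring.inverse (1 + N • Q) * (d • T)) =
      (-(2 * d ^ 2 / (1 + 2 * N))) • 1 := by
  rw [ring_inverse_one_add_smul hQ hN]
  generalize hc : N / (1 + 2 * N) = c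
  have hexpand : ((1 - c • Q) * (d • T)) * ((1 - c • Q) * (d • T)) =
      d ^ 2 • (T * T - c • (T * Q * T) - c • (Q * (T * T)) + c ^ 2 • (Q * T * Q * T)) := by
    simp only [sub_mul, mul_sub, one_mul, smul_mul_assoc, mul_smul_comm, smul_smul, mul_assoc]
    match_scalars <;> ring
  rw [hexpand, hT, hTQT, hQTQ]
  simp only [zero_mul, mul_smul_comm, mul_one, smul_zero, add_zero]
  match_scalars
  · rw [← hc]
    field_simp
    ring
  · ring

end InverseAlgebra

theorem ContinuousLinearMap.mul_self_ne_neg_one_of_apply_eq_zero {R E : Type*} [Ring R]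
    [TopologicalSpace E] [AddCommGroup E] [IsTopologicalAddGroup E] [Module R E] {L : E →L[R] E}
    {v : E} (hv : v ≠ 0) (hLv : L v = 0) : L * L ≠ -1 := by
  intro h
  apply hv
  simpa [hLv] using congrArg (· v) h

section EuclideanCLM

variable {n : Type*} [Fintype n] [DecidableEq n]

theorem adjoint_toEuclideanCLM (A : Matrix n n ℝ) :
    ContinuousLinearMap.adjoint (toEuclideanCLM (𝕜 := ℝ) A) = toEuclideanCLM (𝕜 := ℝ) Aᵀ := by
  rw [← ContinuousLinearMap.star_eq_adjoint, ← map_star, star_eq_conjTranspose,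
    conjTranspose_eq_transpose_of_trivial]

theorem hasFDerivAt_toEuclideanCLM {𝕜 : Type*} [RCLike 𝕜]
    {f : EuclideanSpace 𝕜 n → EuclideanSpace 𝕜 n} {A : Matrix n n 𝕜} {p : EuclideanSpace 𝕜 n}
    (L : n → EuclideanSpace 𝕜 n →L[𝕜] 𝕜) (hf : ∀ i, HasFDerivAt (fun x => f x i) (L i) p)
    (hL : ∀ i v, L i v = ∑ j, A i j * v j) :
    HasFDerivAt f (toEuclideanCLM (𝕜 := 𝕜) A) p := by
  refine hasFDerivWithinAt_univ.1 ((hasFDerivWithinAt_piLp 2).2 fun i => ?_)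
  refine (hf i).hasFDerivWithinAt.congr_fderiv ?_
  ext v
  simp [hL, mulVec, dotProduct]

end EuclideanCLM

local notation "toE" => toEuclideanCLM (n := Fin 4) (𝕜 := ℝ)

def diagQ : Matrix (Fin 4) (Fin 4) ℝ := !![1, 0, 1, 0; 0, 1, 0, 1; 1, 0, 1, 0; 0, 1, 0, 1]

def skewT : Matrix (Fin 4) (Fin 4) ℝ := !![0, 0, -1, -1; 0, 0, -1, 1; 1, 1, 0, 0; 1, -1, 0, 0]

def iMat : Matrix (Fin 4) (Fin 4) ℝ := !![0, -1, 0, 0; 1, 0, 0, 0; 0, 0, 0, -1; 0, 0, 1, 0]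

def jacobian (a b α β : ℝ) : Matrix (Fin 4) (Fin 4) ℝ :=
  !![a + α, b + α, a + α, b + α;
     b + α, -(a + α), b + α, -(a + α);
     a + β, b + β, a + β, b + β;
     b + β, -(a + β), b + β, -(a + β)]

theorem diagQ_mul_self : diagQ * diagQ = (2 : ℝ) • diagQ := by
  ext i j
  fin_cases i <;> fin_cases j <;> simp [diagQ, mul_apply, Fin.sum_univ_four] <;> norm_num

theorem skewT_mul_self : skewT * skewT = -(2 : ℝ) • 1 := by
  ext i j
  fin_cases i <;> fin_cases j <;> simp [skewT, mul_apply, Fin.sum_univ_four] <;> norm_num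

theorem diagQ_mul_skewT_mul_diagQ : diagQ * skewT * diagQ = 0 := by
  ext i j
  fin_cases i <;> fin_cases j <;> simp [diagQ, skewT, mul_apply, Fin.sum_univ_four]

theorem skewT_mul_diagQ_mul_skewT : skewT * diagQ * skewT = (2 : ℝ) • diagQ - (4 : ℝ) • 1 := by
  ext i j
  fin_cases i <;> fin_cases j <;> simp [diagQ, skewT, mul_apply, Fin.sum_univ_four] <;> norm_num

theorem jacobian_transpose_mul_self (a b α β : ℝ) :
    (jacobian a b α β)ᵀ * jacobian a b α β =
      ((a + α) ^ 2 + (b + α) ^ 2 + (a + β) ^ 2 + (b + β) ^ 2) • diagQ := by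
  ext i j
  fin_cases i <;> fin_cases j <;> simp [jacobian, diagQ, mul_apply, Fin.sum_univ_four] <;> ring

theorem jacobian_transpose_sub_self (a b α β : ℝ) :
    (jacobian a b α β)ᵀ - jacobian a b α β = (α - β) • skewT := by
  ext i j
  fin_cases i <;> fin_cases j <;> simp [jacobian, skewT] <;> ring

theorem jacobian_mul_iMat (a b α β : ℝ) :
    jacobian a b α β * iMat = -(iMat * jacobian a b α β) := by
  ext i j
  fin_cases i <;> fin_cases j <;> simp [jacobian, iMat, mul_apply, Fin.sum_univ_four]

theorem jacobian_mulVec (a b α β : ℝ) : jacobian a b α β *ᵥ ![1, 0, -1, 0] = 0 := by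
  ext i
  fin_cases i <;> simp [jacobian, mulVec, dotProduct, Fin.sum_univ_four]

def sumXZ : E4 →L[ℝ] ℝ := EuclideanSpace.proj 0 + EuclideanSpace.proj 2

def sumYW : E4 →L[ℝ] ℝ := EuclideanSpace.proj 1 + EuclideanSpace.proj 3

@[simp]
theorem sumXZ_apply (x : E4) : sumXZ x = x 0 + x 2 := rfl

@[simp]
theorem sumYW_apply (x : E4) : sumYW x = x 1 + x 3 := rfl

theorem hasFDerivAt_uS (p : E4) : HasFDerivAt uS (ux p • sumXZ + uy p • sumYW) p := by
  have h := ((Real.hasDerivAt_sin (sumXZ p)).comp_hasFDerivAt p sumXZ.hasFDerivAt).mul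
    ((Real.hasDerivAt_cosh (sumYW p)).comp_hasFDerivAt p sumYW.hasFDerivAt)
  refine h.congr_fderiv ?_
  simp only [ux, uy, smul_smul, Function.comp_apply, sumXZ_apply, sumYW_apply]
  module

theorem hasFDerivAt_vS (p : E4) : HasFDerivAt vS (uy p • sumXZ - ux p • sumYW) p := by
  have h := (((Real.hasDerivAt_cos (sumXZ p)).comp_hasFDerivAt p sumXZ.hasFDerivAt).mul
    ((Real.hasDerivAt_sinh (sumYW p)).comp_hasFDerivAt p sumYW.hasFDerivAt)).neg
  refine h.congr_fderiv ?_
  simp only [ux, uy, smul_smul, Function.comp_apply, sumXZ_apply, sumYW_apply]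
  module

theorem hasFDerivAt_uS_add_mul_u0 (γ : ℝ) (p : E4) :
    HasFDerivAt (fun x => uS x + γ * u0 x) ((ux p + γ) • sumXZ + (uy p + γ) • sumYW) p := by
  have hu0 : u0 = ⇑(sumXZ + sumYW) := by
    ext x
    simp [u0]
    ring
  rw [hu0]
  refine ((hasFDerivAt_uS p).add ((sumXZ + sumYW).hasFDerivAt.const_mul γ)).congr_fderiv ?_
  module

theorem hasFDerivAt_vS_add_mul_v0 (γ : ℝ) (p : E4) :
    HasFDerivAt (fun x => vS x + γ * v0 x) ((uy p + γ) • sumXZ - (ux p + γ) • sumYW) p := by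
  have hv0 : v0 = ⇑(sumXZ - sumYW) := by
    ext x
    simp [v0]
    ring
  rw [hv0]
  refine ((hasFDerivAt_vS p).add ((sumXZ - sumYW).hasFDerivAt.const_mul γ)).congr_fderiv ?_
  module

theorem hasFDerivAt_fT (α β : ℝ) (p : E4) :
    HasFDerivAt (fT α β) (toE (jacobian (ux p) (uy p) α β)) p := by
  refine hasFDerivAt_toEuclideanCLM
    ![(ux p + α) • sumXZ + (uy p + α) • sumYW, (uy p + α) • sumXZ - (ux p + α) • sumYW,
      (ux p + β) • sumXZ + (uy p + β) • sumYW, (uy p + β) • sumXZ - (ux p + β) • sumYW]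
    (fun i => ?_) (fun i v => ?_)
  · fin_cases i
    exacts [hasFDerivAt_uS_add_mul_u0 α p, hasFDerivAt_vS_add_mul_v0 α p,
      hasFDerivAt_uS_add_mul_u0 β p, hasFDerivAt_vS_add_mul_v0 β p]
  · fin_cases i <;> simp [jacobian, Fin.sum_univ_four] <;> ring

theorem fderiv_fT (α β : ℝ) (p : E4) :
    fderiv ℝ (fT α β) p = toE (jacobian (ux p) (uy p) α β) :=
  (hasFDerivAt_fT α β p).fderiv

theorem iC_eq_toE : iC = toE iMat := rfl

theorem Sp_fT_mul_self (α β : ℝ) (p : E4) :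
    Sp (fT α β) p * Sp (fT α β) p = -(cos2 α β p) • 1 := by
  have hG : 1 + (toE (jacobian (ux p) (uy p) α β)).adjoint * toE (jacobian (ux p) (uy p) α β) =
      1 + ((ux p + α) ^ 2 + (uy p + α) ^ 2 + (ux p + β) ^ 2 + (uy p + β) ^ 2) • toE diagQ := by
    rw [adjoint_toEuclideanCLM, ← map_mul, jacobian_transpose_mul_self, map_smul]
  have hD : (toE (jacobian (ux p) (uy p) α β)).adjoint - toE (jacobian (ux p) (uy p) α β) =
      (α - β) • toE skewT := by
    rw [adjoint_toEuclideanCLM, ← map_sub, jacobian_transpose_sub_self, map_smul]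
  rw [Sp, fderiv_fT, hG, hD, ring_inverse_one_add_smul_mul_smul_mul_self
    (by rw [← map_mul, diagQ_mul_self, map_smul])
    (by rw [← map_mul, skewT_mul_self, map_smul, map_one])
    (by rw [← map_mul, ← map_mul, diagQ_mul_skewT_mul_diagQ, map_zero])
    (by rw [← map_mul, ← map_mul, skewT_mul_diagQ_mul_skewT, map_sub, map_smul, map_smul, map_one])
    (by positivity)]
  rfl

theorem sq_sub_le_sum_sq (a b α β : ℝ) :
    (α - β) ^ 2 ≤ (a + α) ^ 2 + (b + α) ^ 2 + (a + β) ^ 2 + (b + β) ^ 2 := by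
  nlinarith [sq_nonneg (2 * a + α + β), sq_nonneg (2 * b + α + β)]

theorem cos2_le (α β : ℝ) (p : E4) : cos2 α β p ≤ 2 * (α - β) ^ 2 / (1 + 2 * (α - β) ^ 2) :=
  div_le_div_of_nonneg_left (by positivity) (by positivity)
    (by linarith [sq_sub_le_sum_sq (ux p) (uy p) α β])

theorem div_one_add_le_div_one_add {s t : ℝ} (hs : 0 ≤ s) (hst : s ≤ t) :
    s / (1 + s) ≤ t / (1 + t) := by
  rw [div_le_div_iff₀ (by positivity) (by linarith)]
  linarith

theorem stmt_15 (α β : ℝ) :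
    Differentiable ℝ (fT α β) ∧
    (∀ p : E4, (fderiv ℝ (fT α β) p) ∘L iC = -(iC ∘L fderiv ℝ (fT α β) p)) ∧
    (∀ p : E4, Sp (fT α β) p * Sp (fT α β) p = -(cos2 α β p) • 1) ∧
    (∀ p : E4, cos2 α β p ≤ 2 * (α - β) ^ 2 / (1 + 2 * (α - β) ^ 2)) ∧
    2 * (α - β) ^ 2 / (1 + 2 * (α - β) ^ 2) < 1 ∧
    (∀ p : E4, fderiv ℝ (fT α β) p * fderiv ℝ (fT α β) p ≠ -1) ∧
    (α * β ≥ 0 →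
      ∀ p : E4, cos2 α β p ≤ 2 * (α ^ 2 + β ^ 2) / (1 + 2 * (α ^ 2 + β ^ 2))) := by
  refine ⟨fun p => (hasFDerivAt_fT α β p).differentiableAt, fun p => ?_, Sp_fT_mul_self α β,
    cos2_le α β, ?_, fun p => ?_, fun hab p => ?_⟩
  · have h := congrArg toE (jacobian_mul_iMat (ux p) (uy p) α β)
    rwa [map_mul, map_neg, map_mul, ← fderiv_fT, ← iC_eq_toE] at h
  · rw [div_lt_one (by positivity)]
    linarith
  · rw [fderiv_fT]
    refine ContinuousLinearMap.mul_self_ne_neg_one_of_apply_eq_zero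
      (v := WithLp.toLp 2 ![1, 0, -1, 0]) (by simp) ?_
    simp [jacobian_mulVec]
  · exact (cos2_le α β p).trans (div_one_add_le_div_one_add (by positivity) (by nlinarith))

end
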